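/- arXiv:2106.06603 — 2 statements merged into one kernel-verified Lean document; each statement's English description precedes it below -/
import Mathlib

section
/- Let G be a group assignment and A: Y^n → Y^n an (α, G)-dσ-private shuffling mechanism. For any prior distribution P on joint sequences and any i ∈ [n], conditioned on knowing the unordered multiset of noisy values inside group G_i and the assignment of all noisy values outside G_i, the likelihood ratio of the released sequence z under any two hypotheses x_i = a versus x_i = b is bounded: |log( Pr_P[z | x_i=a, {y_{G_i}}, y_{Ḡ_i}] / Pr_P[z | x_i=b, {y_{G_i}}, y_{Ḡ_i}] )| ≤ α. -/
open scoped ENNReal BigOperators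

/-- Apply a permutation to a sequence: `(σ(y))_j = y_{σ(j)}`. -/
def permSeq {n : ℕ} {Y : Type*} (σ : Equiv.Perm (Fin n)) (y : Fin n → Y) : Fin n → Y :=
  fun j => y (σ j)

/-- `(α, G)`-dσ-privacy of a shuffling mechanism `A`. -/
def DSigmaPrivate {n : ℕ} {Y : Type*} (α : ℝ) (G : Fin n → Finset (Fin n))
    (A : (Fin n → Y) → PMF (Fin n → Y)) : Prop :=
  ∀ y : Fin n → Y, ∀ σ σ' : Equiv.Perm (Fin n), (∃ i, ∀ j ∉ G i, σ j = σ' j) →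
    ∀ O : Set (Fin n → Y), (A (permSeq σ y)).toOuterMeasure O ≤
      ENNReal.ofReal (Real.exp α) * (A (permSeq σ' y)).toOuterMeasure O

/-- The conditioning event of the informed adversary: `x_i = a`, the unordered multiset of
noisy values inside group `G i` equals `m`, and the noisy values outside `G i` agree
with `w`. -/
def InformedEvent {n : ℕ} {X Y : Type*} (G : Fin n → Finset (Fin n)) (i : Fin n)
    (a : X) (m : Multiset Y) (w : Fin n → Y) :
    Set ((Fin n → X) × (Fin n → Y)) :=
  {p | p.1 i = a ∧ (G i).val.map p.2 = m ∧ ∀ j ∉ G i, p.2 j = w j}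

lemma exists_perm_of_map_eq {n : ℕ} {Y : Type*} (s : Finset (Fin n)) :
    ∀ y y' : Fin n → Y, s.val.map y = s.val.map y' →
      ∃ σ : Equiv.Perm (Fin n), (∀ j ∉ s, σ j = j) ∧ ∀ j ∈ s, y' j = y (σ j) := by
  induction s using Finset.strongInduction with
  | _ s ih =>
    intro y y' h
    rcases s.eq_empty_or_nonempty with rfl | ⟨a, ha⟩
    · exact ⟨1, fun j _ => rfl, fun j hj => absurd hj (by simp)⟩
    · have hy'a : y' a ∈ s.val.map y' := Multiset.mem_map_of_mem _ ha
      rw [← h] at hy'a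
      obtain ⟨b, hb, hba⟩ := Multiset.mem_map.1 hy'a
      have hb' : b ∈ s := hb
      set τ := Equiv.swap a b with hτ
      have hmapτ : s.val.map (⇑τ) = s.val := by
        have himg : s.image τ = s := by
          apply Finset.eq_of_subset_of_card_le
          · intro x hx
            obtain ⟨u, hu, rfl⟩ := Finset.mem_image.1 hx
            rcases eq_or_ne u a with rfl | hua
            · simpa [hτ] using hb'
            rcases eq_or_ne u b with rfl | hub
            · simpa [hτ] using ha
            · simpa [hτ, Equiv.swap_apply_of_ne_of_ne hua hub] using hu
          · exact le_of_eq (Finset.card_image_of_injective s τ.injective).symm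
        have := congrArg Finset.val himg
        rwa [Finset.image_val,
          Multiset.dedup_eq_self.2 ((s.nodup.map τ.injective))] at this
      have hmap1 : s.val.map (fun j => y (τ j)) = s.val.map y' := by
        calc s.val.map (fun j => y (τ j)) = (s.val.map ⇑τ).map y := by
              rw [Multiset.map_map]; rfl
          _ = s.val.map y := by rw [hmapτ]
          _ = s.val.map y' := h
      have hav : a ∈ s.val := ha
      have hcons : a ::ₘ s.val.erase a = s.val := Multiset.cons_erase hav
      have htails : (s.erase a).val.map (fun j => y (τ j)) = (s.erase a).val.map y' := by
        have h2 : (a ::ₘ s.val.erase a).map (fun j => y (τ j))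
            = (a ::ₘ s.val.erase a).map y' := by rw [hcons]; exact hmap1
        rw [Multiset.map_cons, Multiset.map_cons] at h2
        have hha : y (τ a) = y' a := by simp [hτ, hba]
        rw [hha] at h2
        have := (Multiset.cons_inj_right (y' a)).1 h2
        simpa [Finset.erase_val] using this
      obtain ⟨ρ, hρ_out, hρ⟩ := ih (s.erase a) (Finset.erase_ssubset ha)
        (fun j => y (τ j)) y' htails
      refine ⟨τ * ρ, ?_, ?_⟩
      · intro j hj
        have hje : j ∉ s.erase a := fun hc => hj (Finset.mem_of_mem_erase hc)
        have hja : j ≠ a := fun hc => hj (hc ▸ ha)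
        have hjb : j ≠ b := fun hc => hj (hc ▸ hb')
        simp [Equiv.Perm.mul_apply, hρ_out j hje, hτ,
          Equiv.swap_apply_of_ne_of_ne hja hjb]
      · intro j hj
        rcases eq_or_ne j a with rfl | hja
        · have : ρ j = j := hρ_out j (Finset.notMem_erase j s)
          simp [Equiv.Perm.mul_apply, this, hτ, hba]
        · have hje : j ∈ s.erase a := Finset.mem_erase.2 ⟨hja, hj⟩
          simpa [Equiv.Perm.mul_apply] using hρ j hje

/-- Any two noisy sequences compatible with the informed adversary's view yield
outputs whose likelihood at `z` differ by at most `e^α`. -/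
lemma key_bound {n : ℕ} {Y : Type*} {α : ℝ} {G : Fin n → Finset (Fin n)}
    {A : (Fin n → Y) → PMF (Fin n → Y)} (hA : DSigmaPrivate α G A)
    (i : Fin n) {m : Multiset Y} {w : Fin n → Y}
    {y y' : Fin n → Y} (hy : (G i).val.map y = m) (hy' : (G i).val.map y' = m)
    (hwy : ∀ j ∉ G i, y j = w j) (hwy' : ∀ j ∉ G i, y' j = w j) (z : Fin n → Y) :
    (A y') z ≤ ENNReal.ofReal (Real.exp α) * (A y) z := by
  obtain ⟨σ, hσ_out, hσ⟩ := exists_perm_of_map_eq (G i) y y' (by rw [hy, hy'])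
  have hperm : permSeq σ y = y' := by
    funext j
    by_cases hj : j ∈ G i
    · exact (hσ j hj).symm
    · show y (σ j) = y' j
      rw [hσ_out j hj, hwy j hj, hwy' j hj]
  have h1 : permSeq (1 : Equiv.Perm (Fin n)) y = y := rfl
  have := hA y σ 1 ⟨i, fun j hj => by rw [hσ_out j hj]; rfl⟩ {z}
  rw [hperm, h1, PMF.toOuterMeasure_apply_singleton,
    PMF.toOuterMeasure_apply_singleton] at this
  exact this

/-- Semantic guarantee: for an `(α, G)`-dσ-private shuffling mechanism `A`
and any prior `P` on joint sequences `(x, y)`, the likelihoods of the released sequence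
`z` under the hypotheses `x_i = a` vs `x_i = b` — conditioned on the unordered multiset of
noisy values in `G i` and the noisy values outside `G i` — differ by a factor of at most
`e^α`. -/
theorem dsigma_semantic_guarantee {n : ℕ} {X Y : Type*} (α : ℝ)
    (G : Fin n → Finset (Fin n)) (A : (Fin n → Y) → PMF (Fin n → Y))
    (hA : DSigmaPrivate α G A) (P : PMF ((Fin n → X) × (Fin n → Y)))
    (i : Fin n) (m : Multiset Y) (w : Fin n → Y) (z : Fin n → Y)
    (hpos : ∀ c : X,
      (∑' p : (Fin n → X) × (Fin n → Y),
        (InformedEvent G i c m w).indicator (fun p => P p) p) ≠ 0) :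
    ∀ a b : X,
      (∑' p : (Fin n → X) × (Fin n → Y),
          (InformedEvent G i a m w).indicator (fun p => P p * (A p.2) z) p) /
        (∑' p : (Fin n → X) × (Fin n → Y),
          (InformedEvent G i a m w).indicator (fun p => P p) p)
      ≤ ENNReal.ofReal (Real.exp α) *
        ((∑' p : (Fin n → X) × (Fin n → Y),
            (InformedEvent G i b m w).indicator (fun p => P p * (A p.2) z) p) /
          (∑' p : (Fin n → X) × (Fin n → Y),
            (InformedEvent G i b m w).indicator (fun p => P p) p)) := by
  intro a b
  set E : X → Set ((Fin n → X) × (Fin n → Y)) := fun c => InformedEvent G i c m w with hE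
  set N : X → ℝ≥0∞ := fun c => ∑' p, (E c).indicator (fun p => P p * (A p.2) z) p with hN
  set D : X → ℝ≥0∞ := fun c => ∑' p, (E c).indicator (fun p => P p) p with hD
  have hD_le : ∀ c, D c ≤ 1 := by
    intro c
    calc D c ≤ ∑' p, P p := ENNReal.tsum_le_tsum fun p => Set.indicator_le_self _ _ p
      _ = 1 := P.tsum_coe
  have hD_ne_top : ∀ c, D c ≠ ∞ := fun c => ne_top_of_le_ne_top ENNReal.one_ne_top (hD_le c)
  have hD_ne : ∀ c, D c ≠ 0 := hpos
  -- claim: for every p in E a, A p.2 z ≤ e^α * (N b / D b)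
  have claim : ∀ p ∈ E a, (A p.2) z ≤ ENNReal.ofReal (Real.exp α) * (N b / D b) := by
    intro p hp
    rw [← mul_div_assoc]
    rw [ENNReal.le_div_iff_mul_le (Or.inl (hD_ne b)) (Or.inl (hD_ne_top b))]
    have step : (A p.2) z * D b
        = ∑' q, (E b).indicator (fun q => (A p.2) z * P q) q := by
      rw [hD, ← ENNReal.tsum_mul_left]
      congr 1; funext q
      by_cases hq : q ∈ E b <;> simp [Set.indicator_of_mem, Set.indicator_of_notMem, hq]
    rw [step]
    have hle : ∀ q, (E b).indicator (fun q => (A p.2) z * P q) q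
        ≤ ENNReal.ofReal (Real.exp α) * (E b).indicator (fun q => P q * (A q.2) z) q := by
      intro q
      by_cases hq : q ∈ E b
      · rw [Set.indicator_of_mem hq, Set.indicator_of_mem hq]
        obtain ⟨_, hpm, hpw⟩ := hp
        obtain ⟨_, hqm, hqw⟩ := hq
        have := key_bound hA i hqm hpm hqw hpw z
        calc (A p.2) z * P q ≤ (ENNReal.ofReal (Real.exp α) * (A q.2) z) * P q :=
              mul_le_mul_left this _
          _ = ENNReal.ofReal (Real.exp α) * (P q * (A q.2) z) := by ring
      · simp [Set.indicator_of_notMem hq]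
    calc (∑' q, (E b).indicator (fun q => (A p.2) z * P q) q)
        ≤ ∑' q, ENNReal.ofReal (Real.exp α) * (E b).indicator (fun q => P q * (A q.2) z) q :=
          ENNReal.tsum_le_tsum hle
      _ = ENNReal.ofReal (Real.exp α) * N b := by rw [ENNReal.tsum_mul_left]
  -- bound N a
  have hNa : N a ≤ (ENNReal.ofReal (Real.exp α) * (N b / D b)) * D a := by
    have : N a ≤ ∑' p, (E a).indicator
        (fun p => P p * (ENNReal.ofReal (Real.exp α) * (N b / D b))) p := by
      apply ENNReal.tsum_le_tsum
      intro p
      by_cases hp : p ∈ E a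
      · rw [Set.indicator_of_mem hp, Set.indicator_of_mem hp]
        exact mul_le_mul_right (claim p hp) _
      · simp [Set.indicator_of_notMem hp]
    refine this.trans (le_of_eq ?_)
    rw [mul_comm, hD, ← ENNReal.tsum_mul_left]
    congr 1; funext p
    by_cases hp : p ∈ E a <;>
      simp [Set.indicator_of_mem, Set.indicator_of_notMem, hp, mul_comm]
  rw [ENNReal.div_le_iff (hD_ne a) (hD_ne_top a)]
  exact hNa
end

section
/- Let A be a shuffling mechanism on S_n. Suppose for every prior on the true permutation σ, every i, j ∈ [n], and every released σ', the posterior odds bound Pr[σ ∈ Σ_{i,j} | σ'] ≤ e^α Pr[σ ∈ Σ_{i,j}] and Pr[σ ∈ Σ_{i,j}] ≤ e^α Pr[σ ∈ Σ_{i,j} | σ'] hold. Then A must satisfy Pr[σ' | σ_a] ≤ e^α Pr[σ' | σ_b] for all pairs of distinct permutations σ_a, σ_b and all outputs σ', i.e. A is (α, Ĝ)-dσ-private for the full group assignment. -/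
/-!
Put prior mass `p` on `σa` and `1 - p` on `σb`, and pick `i` with `σa i ≠ σb i`, so that
`Σ_{i, σa i}` contains `σa` but not `σb`. By Bayes' rule its posterior given `σ'` is
`p Q(σ'|σa) / (p Q(σ'|σa) + (1 - p) Q(σ'|σb))`, and the bound `posterior ≤ e^α · p` becomes
`Q(σ'|σa) ≤ e^α (p Q(σ'|σa) + (1 - p) Q(σ'|σb))`. Letting `p → 0` gives
`Q(σ'|σa) ≤ e^α Q(σ'|σb)`.
-/

open scoped ENNReal

open Finset Filter Topology

section TwoPointPrior

variable {α : Type*} [Fintype α] [DecidableEq α] {a b : α} (hab : a ≠ b) {p : ℝ≥0∞}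
  (hp : p ≤ 1)

noncomputable def twoPointPrior : PMF α :=
  PMF.ofFintype (fun x => if x = a then p else if x = b then 1 - p else 0) (by
    rw [Fintype.sum_eq_add a b hab fun x hx => by simp [hx.1, hx.2]]
    simp [hab.symm, add_tsub_cancel_of_le hp])

theorem sum_twoPointPrior_mul (g : α → ℝ≥0∞) :
    ∑ x, twoPointPrior hab hp x * g x = p * g a + (1 - p) * g b := by
  rw [Fintype.sum_eq_add a b hab fun x hx => by simp [twoPointPrior, hx.1, hx.2]]
  simp [twoPointPrior, hab.symm]

variable {S : α → Prop} [DecidablePred S]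

theorem sum_filter_twoPointPrior_mul (ha : S a) (hb : ¬S b) (g : α → ℝ≥0∞) :
    ∑ x ∈ univ.filter S, twoPointPrior hab hp x * g x = p * g a := by
  rw [sum_filter]
  simp_rw [← mul_ite_zero]
  rw [sum_twoPointPrior_mul, if_pos ha, if_neg hb, mul_zero, add_zero]

theorem sum_filter_twoPointPrior (ha : S a) (hb : ¬S b) :
    ∑ x ∈ univ.filter S, twoPointPrior hab hp x = p := by
  simpa using sum_filter_twoPointPrior_mul hab hp ha hb 1

end TwoPointPrior

theorem le_mul_of_mul_div_le_mul {p x D E : ℝ≥0∞} (hp0 : p ≠ 0) (hp : p ≠ ⊤) (hD0 : D ≠ 0)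
    (hD : D ≠ ⊤) (h : p * x / D ≤ E * p) : x ≤ E * D := by
  rw [ENNReal.div_le_iff hD0 hD, mul_right_comm] at h
  exact (ENNReal.mul_le_mul_iff_right hp0 hp).mp (by simpa only [mul_comm] using h)

theorem le_mul_of_forall_le_mul_mixture {x y E : ℝ≥0∞} (hx : x ≠ ⊤) (hy : y ≠ ⊤) (hE : E ≠ ⊤)
    (h : ∀ p, 0 < p → p ≤ 1 → x ≤ E * (p * x + (1 - p) * y)) : x ≤ E * y := by
  have hcont : Continuous fun p : ℝ≥0∞ => E * (p * x + (1 - p) * y) :=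
    (ENNReal.continuous_const_mul hE).comp <| (ENNReal.continuous_mul_const hx).add <|
      (ENNReal.continuous_mul_const hy).comp (ENNReal.continuous_sub_left ENNReal.one_ne_top)
  have hlim : Tendsto (fun p : ℝ≥0∞ => E * (p * x + (1 - p) * y)) (𝓝[>] 0) (𝓝 (E * y)) := by
    simpa using hcont.continuousWithinAt.tendsto (x := 0) (s := Set.Ioi 0)
  refine ge_of_tendsto hlim ?_
  filter_upwards [Ioo_mem_nhdsGT zero_lt_one] with p hp using h p hp.1 hp.2.le

/-- necessity: if for every prior `π` on the true permutation, every
`i, j` and every released `σ'`, the posterior probability of `Σ_{i,j} = {σ : σ i = j}`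
is within a factor `e^{±α}` of its prior, then the shuffling mechanism `Q` must satisfy
`Q σa σ' ≤ e^α · Q σb σ'` for all distinct `σa, σb` — i.e. it is `(α, Ĝ)`-dσ-private for
the full group assignment. -/
theorem definetti_resistance_needs_full_shuffle {n : ℕ}
    (Q : Equiv.Perm (Fin n) → PMF (Equiv.Perm (Fin n))) (α : ℝ)
    (hpost : ∀ π : PMF (Equiv.Perm (Fin n)), ∀ i j : Fin n, ∀ σ' : Equiv.Perm (Fin n),
      (∑ σ : Equiv.Perm (Fin n), π σ * Q σ σ') ≠ 0 →
      ENNReal.ofReal (Real.exp (-α)) *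
          (∑ σ ∈ Finset.univ.filter (fun σ : Equiv.Perm (Fin n) => σ i = j), π σ)
        ≤ (∑ σ ∈ Finset.univ.filter (fun σ : Equiv.Perm (Fin n) => σ i = j), π σ * Q σ σ') /
            (∑ σ : Equiv.Perm (Fin n), π σ * Q σ σ')
      ∧ (∑ σ ∈ Finset.univ.filter (fun σ : Equiv.Perm (Fin n) => σ i = j), π σ * Q σ σ') /
            (∑ σ : Equiv.Perm (Fin n), π σ * Q σ σ')
          ≤ ENNReal.ofReal (Real.exp α) *
              (∑ σ ∈ Finset.univ.filter (fun σ : Equiv.Perm (Fin n) => σ i = j), π σ)) :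
    ∀ σa σb σ' : Equiv.Perm (Fin n), σa ≠ σb →
      Q σa σ' ≤ ENNReal.ofReal (Real.exp α) * Q σb σ' := by
  intro σa σb σ' hne
  obtain ⟨i, hi⟩ : ∃ i, σa i ≠ σb i := not_forall.mp (mt Equiv.ext hne)
  rcases eq_or_ne (Q σa σ') 0 with h0 | h0
  · simp [h0]
  refine le_mul_of_forall_le_mul_mixture (PMF.apply_ne_top _ _) (PMF.apply_ne_top _ _)
    ENNReal.ofReal_ne_top fun p hp0 hp1 => ?_
  have hptop : p ≠ ⊤ := ne_top_of_le_ne_top ENNReal.one_ne_top hp1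
  have hD := sum_twoPointPrior_mul hne hp1 fun σ => Q σ σ'
  have hD0 : p * Q σa σ' + (1 - p) * Q σb σ' ≠ 0 := by simp [hp0.ne', h0]
  have hS : σb i ≠ σa i := hi.symm
  have hbound := (hpost (twoPointPrior hne hp1) i (σa i) σ' (hD ▸ hD0)).2
  rw [sum_filter_twoPointPrior_mul (S := fun σ => σ i = σa i) hne hp1 rfl hS,
    sum_filter_twoPointPrior (S := fun σ => σ i = σa i) hne hp1 rfl hS, hD] at hbound
  have hDtop : p * Q σa σ' + (1 - p) * Q σb σ' ≠ ⊤ :=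
    ENNReal.add_ne_top.mpr ⟨ENNReal.mul_ne_top hptop (PMF.apply_ne_top _ _),
      ENNReal.mul_ne_top (ENNReal.sub_ne_top ENNReal.one_ne_top) (PMF.apply_ne_top _ _)⟩
  exact le_mul_of_mul_div_le_mul hp0.ne' hptop hD0 hDtop hbound
end
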